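/- On the 11-vertex network of Section 4 with unit conductances (vertices X, V, S, T, Y, L, U, C1, C2, C3, C4 and the indicated edges), the unique solution f of the Dirichlet–Neumann problem with f = 0 on P₂, f = 1 on P₄, f harmonic at interior vertices, and zero normal derivative on P₁ and P₃, has Dirichlet energy I(f) = 16/11. -/

import Mathlib

open Finset

/-- The vertices of the 11-unknown example network of Section 4: the interior
vertices `X, S, T, Y, L, C1, C2, C3, C4`, the Neumann boundary vertices `V`
(on `P₃`) and `U` (on `P₁`), the Dirichlet boundary vertices `Z0` (the vertex
"0" of `P₂`) and `Z1` (the vertex "1" of `P₄`), and the four corners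
`A, D ∈ P₂` and `B, Cc ∈ P₄`. -/
inductive ExVtx : Type
  | vX | vV | vS | vT | vY | vL | vU | vC1 | vC2 | vC3 | vC4
  | vZ0 | vZ1 | vA | vB | vCc | vD
  deriving DecidableEq

instance : Fintype ExVtx where
  elems := {ExVtx.vX, ExVtx.vV, ExVtx.vS, ExVtx.vT, ExVtx.vY, ExVtx.vL, ExVtx.vU,
    ExVtx.vC1, ExVtx.vC2, ExVtx.vC3, ExVtx.vC4, ExVtx.vZ0, ExVtx.vZ1, ExVtx.vA,
    ExVtx.vB, ExVtx.vCc, ExVtx.vD}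
  complete := by
    intro x
    cases x <;> decide

namespace ExVtx

/-- The edge list of the triangulation (each undirected edge listed once). -/
def exEdges : List (ExVtx × ExVtx) :=
  [(vX, vC1), (vX, vC2), (vX, vC3), (vX, vC4),
   (vX, vT), (vX, vY), (vX, vS), (vX, vL),
   (vC1, vY), (vY, vC2), (vC2, vL), (vL, vC3),
   (vC3, vS), (vS, vC4), (vC4, vT), (vT, vC1),
   (vZ0, vC1), (vZ0, vY), (vZ0, vT), (vA, vY),
   (vV, vY), (vV, vC2), (vV, vL), (vB, vL),
   (vZ1, vL), (vZ1, vC3), (vZ1, vS), (vCc, vS),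
   (vU, vS), (vU, vC4), (vU, vT), (vD, vT),
   (vZ0, vA), (vA, vV), (vV, vB), (vB, vZ1),
   (vZ1, vCc), (vCc, vU), (vU, vD), (vD, vZ0)]

/-- Adjacency in the example network. -/
def exAdj (x y : ExVtx) : Prop := (x, y) ∈ exEdges ∨ (y, x) ∈ exEdges

instance : DecidableRel exAdj :=
  fun x y => inferInstanceAs (Decidable ((x, y) ∈ exEdges ∨ (y, x) ∈ exEdges))

/-- The interior vertices `F`. -/
def exF : Finset ExVtx := {vX, vS, vT, vY, vL, vC1, vC2, vC3, vC4}

/-- `P₁ = {U}`, `P₂ = {D, Z0, A}`, `P₃ = {V}`, `P₄ = {B, Z1, Cc}`. -/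
def exP1 : Finset ExVtx := {vU}
def exP2 : Finset ExVtx := {vD, vZ0, vA}
def exP3 : Finset ExVtx := {vV}
def exP4 : Finset ExVtx := {vB, vZ1, vCc}

private lemma sum_univ (g : ExVtx → ℝ) : ∑ x : ExVtx, g x =
    g vX + g vV + g vS + g vT + g vY + g vL + g vU + g vC1 + g vC2 + g vC3 + g vC4
    + g vZ0 + g vZ1 + g vA + g vB + g vCc + g vD := by
  rw [show (Finset.univ : Finset ExVtx) =
    {vX, vV, vS, vT, vY, vL, vU, vC1, vC2, vC3, vC4, vZ0, vZ1, vA, vB, vCc, vD} from by decide]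
  simp [Finset.sum_insert, Finset.mem_insert]
  ring

private lemma sum_F (g : ExVtx → ℝ) : ∑ x ∈ exF, g x =
    g vX + g vS + g vT + g vY + g vL + g vC1 + g vC2 + g vC3 + g vC4 := by
  simp [exF, Finset.sum_insert, Finset.mem_insert]
  ring

/-- On the 11-vertex example network of Section 4 with unit conductances, the
(unique) solution `f` of the Dirichlet–Neumann boundary value problem —
`f = 0` on `P₂`, `f = 1` on `P₄`, `f` harmonic at interior vertices, zero
normal derivative on `P₁` and `P₃` — has Dirichlet energy `I(f) = 16/11`
(the energy sums `(f(x) - f(y))²` over the edges incident to `F`, each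
undirected edge counted once, hence the factor `1/2` in front of the
directed-edge sum). -/
theorem example_energy (f : ExVtx → ℝ)
    (hharm : ∀ x ∈ exF,
      ∑ y ∈ Finset.univ.filter (fun y => exAdj x y), (f x - f y) = 0)
    (hP2 : ∀ x ∈ exP2, f x = 0)
    (hP4 : ∀ x ∈ exP4, f x = 1)
    (hP13 : ∀ x ∈ exP1 ∪ exP3,
      ∑ y ∈ exF.filter (fun y => exAdj x y), (f x - f y) = 0) :
    (1/2) * ∑ x : ExVtx, ∑ y : ExVtx,
        (if exAdj x y ∧ (x ∈ exF ∨ y ∈ exF) then (f x - f y)^2 else 0)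
      = 16 / 11 := by
  have hZ0 : f vZ0 = 0 := hP2 vZ0 (by decide)
  have hA : f vA = 0 := hP2 vA (by decide)
  have hD : f vD = 0 := hP2 vD (by decide)
  have hZ1 : f vZ1 = 1 := hP4 vZ1 (by decide)
  have hB : f vB = 1 := hP4 vB (by decide)
  have hCc : f vCc = 1 := hP4 vCc (by decide)
  have eX := hharm vX (by decide)
  rw [show Finset.univ.filter (fun y => exAdj vX y) = ({vS, vT, vY, vL, vC1, vC2, vC3, vC4} : Finset ExVtx) from by decide] at eX
  have eS := hharm vS (by decide)
  rw [show Finset.univ.filter (fun y => exAdj vS y) = ({vX, vU, vC3, vC4, vZ1, vCc} : Finset ExVtx) from by decide] at eS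
  have eT := hharm vT (by decide)
  rw [show Finset.univ.filter (fun y => exAdj vT y) = ({vX, vU, vC1, vC4, vZ0, vD} : Finset ExVtx) from by decide] at eT
  have eY := hharm vY (by decide)
  rw [show Finset.univ.filter (fun y => exAdj vY y) = ({vX, vV, vC1, vC2, vZ0, vA} : Finset ExVtx) from by decide] at eY
  have eL := hharm vL (by decide)
  rw [show Finset.univ.filter (fun y => exAdj vL y) = ({vX, vV, vC2, vC3, vZ1, vB} : Finset ExVtx) from by decide] at eL
  have eC1 := hharm vC1 (by decide)
  rw [show Finset.univ.filter (fun y => exAdj vC1 y) = ({vX, vT, vY, vZ0} : Finset ExVtx) from by decide] at eC1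
  have eC2 := hharm vC2 (by decide)
  rw [show Finset.univ.filter (fun y => exAdj vC2 y) = ({vX, vV, vY, vL} : Finset ExVtx) from by decide] at eC2
  have eC3 := hharm vC3 (by decide)
  rw [show Finset.univ.filter (fun y => exAdj vC3 y) = ({vX, vS, vL, vZ1} : Finset ExVtx) from by decide] at eC3
  have eC4 := hharm vC4 (by decide)
  rw [show Finset.univ.filter (fun y => exAdj vC4 y) = ({vX, vS, vT, vU} : Finset ExVtx) from by decide] at eC4
  have eU := hP13 vU (by decide)
  rw [show exF.filter (fun y => exAdj vU y) = ({vS, vT, vC4} : Finset ExVtx) from by decide] at eU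
  have eV := hP13 vV (by decide)
  rw [show exF.filter (fun y => exAdj vV y) = ({vY, vL, vC2} : Finset ExVtx) from by decide] at eV
  simp only [Finset.sum_insert, Finset.mem_insert, Finset.mem_singleton, Finset.sum_singleton, reduceCtorEq, or_self, or_false, false_or, not_false_eq_true] at eX eS eT eY eL eC1 eC2 eC3 eC4 eU eV
  have fX : f vX = (1/2:ℝ) := by linarith
  have fV : f vV = (1/2:ℝ) := by linarith
  have fS : f vS = (31/44:ℝ) := by linarith
  have fT : f vT = (13/44:ℝ) := by linarith
  have fY : f vY = (13/44:ℝ) := by linarith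
  have fL : f vL = (31/44:ℝ) := by linarith
  have fU : f vU = (1/2:ℝ) := by linarith
  have fC1 : f vC1 = (3/11:ℝ) := by linarith
  have fC2 : f vC2 = (1/2:ℝ) := by linarith
  have fC3 : f vC3 = (8/11:ℝ) := by linarith
  have fC4 : f vC4 = (1/2:ℝ) := by linarith
  rw [sum_univ]
  simp only [← Finset.sum_filter]
  rw [show Finset.univ.filter (fun y => exAdj vX y ∧ (vX ∈ exF ∨ y ∈ exF)) = ({vS, vT, vY, vL, vC1, vC2, vC3, vC4} : Finset ExVtx) from by decide]
  rw [show Finset.univ.filter (fun y => exAdj vV y ∧ (vV ∈ exF ∨ y ∈ exF)) = ({vY, vL, vC2} : Finset ExVtx) from by decide]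
  rw [show Finset.univ.filter (fun y => exAdj vS y ∧ (vS ∈ exF ∨ y ∈ exF)) = ({vX, vU, vC3, vC4, vZ1, vCc} : Finset ExVtx) from by decide]
  rw [show Finset.univ.filter (fun y => exAdj vT y ∧ (vT ∈ exF ∨ y ∈ exF)) = ({vX, vU, vC1, vC4, vZ0, vD} : Finset ExVtx) from by decide]
  rw [show Finset.univ.filter (fun y => exAdj vY y ∧ (vY ∈ exF ∨ y ∈ exF)) = ({vX, vV, vC1, vC2, vZ0, vA} : Finset ExVtx) from by decide]
  rw [show Finset.univ.filter (fun y => exAdj vL y ∧ (vL ∈ exF ∨ y ∈ exF)) = ({vX, vV, vC2, vC3, vZ1, vB} : Finset ExVtx) from by decide]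
  rw [show Finset.univ.filter (fun y => exAdj vU y ∧ (vU ∈ exF ∨ y ∈ exF)) = ({vS, vT, vC4} : Finset ExVtx) from by decide]
  rw [show Finset.univ.filter (fun y => exAdj vC1 y ∧ (vC1 ∈ exF ∨ y ∈ exF)) = ({vX, vT, vY, vZ0} : Finset ExVtx) from by decide]
  rw [show Finset.univ.filter (fun y => exAdj vC2 y ∧ (vC2 ∈ exF ∨ y ∈ exF)) = ({vX, vV, vY, vL} : Finset ExVtx) from by decide]
  rw [show Finset.univ.filter (fun y => exAdj vC3 y ∧ (vC3 ∈ exF ∨ y ∈ exF)) = ({vX, vS, vL, vZ1} : Finset ExVtx) from by decide]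
  rw [show Finset.univ.filter (fun y => exAdj vC4 y ∧ (vC4 ∈ exF ∨ y ∈ exF)) = ({vX, vS, vT, vU} : Finset ExVtx) from by decide]
  rw [show Finset.univ.filter (fun y => exAdj vZ0 y ∧ (vZ0 ∈ exF ∨ y ∈ exF)) = ({vT, vY, vC1} : Finset ExVtx) from by decide]
  rw [show Finset.univ.filter (fun y => exAdj vZ1 y ∧ (vZ1 ∈ exF ∨ y ∈ exF)) = ({vS, vL, vC3} : Finset ExVtx) from by decide]
  rw [show Finset.univ.filter (fun y => exAdj vA y ∧ (vA ∈ exF ∨ y ∈ exF)) = ({vY} : Finset ExVtx) from by decide]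
  rw [show Finset.univ.filter (fun y => exAdj vB y ∧ (vB ∈ exF ∨ y ∈ exF)) = ({vL} : Finset ExVtx) from by decide]
  rw [show Finset.univ.filter (fun y => exAdj vCc y ∧ (vCc ∈ exF ∨ y ∈ exF)) = ({vS} : Finset ExVtx) from by decide]
  rw [show Finset.univ.filter (fun y => exAdj vD y ∧ (vD ∈ exF ∨ y ∈ exF)) = ({vT} : Finset ExVtx) from by decide]
  simp only [Finset.sum_insert, Finset.mem_insert, Finset.mem_singleton, Finset.sum_singleton, Finset.sum_empty, reduceCtorEq, or_self, or_false, false_or, not_false_eq_true]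
  rw [fX, fV, fS, fT, fY, fL, fU, fC1, fC2, fC3, fC4, hZ0, hZ1, hA, hB, hCc, hD]
  norm_num

end ExVtx
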